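/- Let λ₁ = 1, λ₂ ∈ (-3/2, 0), λ₃ ∈ (-∞, -3/2) with λ₂ + λ₃ = -3, λ₂ ≠ -1, and λ₂ irrational. Then every resonance relation a₁λ₁ + a₂λ₂ + a₃λ₃ = λᵢ (i ∈ {1,2,3}, a₁,a₂,a₃ ∈ ℕ, a₁+a₂+a₃ ≥ 2) is of the form (a₁,a₂,a₃) = δ·(3,1,1) + eᵢ for some δ ∈ ℕ, δ ≥ 1, where eᵢ is the i-th standard unit vector. -/
import Mathlib

lemma key_aux {lam2 : ℝ} (hirr : Irrational lam2) (m n : ℤ)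
    (h : (m : ℝ) + n * lam2 = 0) : m = 0 ∧ n = 0 := by
  by_cases hn : n = 0
  · subst hn; constructor
    · exact_mod_cast by simpa using h
    · rfl
  · exfalso
    apply hirr
    refine ⟨(-m : ℚ) / n, ?_⟩
    have hn' : (n : ℝ) ≠ 0 := Int.cast_ne_zero.mpr hn
    push_cast
    field_simp
    linarith

/-- Classification of resonance relations among `1, λ₂, λ₃` in the irrational case:
every resonance relation is of the form `δ·(3,1,1) + eᵢ` with `δ ≥ 1`. -/
theorem resonance_classification_irrational (lam2 lam3 : ℝ)
    (h2 : lam2 ∈ Set.Ioo (-(3 : ℝ) / 2) 0) (h3 : lam3 < -(3 : ℝ) / 2)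
    (hsum : lam2 + lam3 = -3) (hne : lam2 ≠ -1) (hirr : Irrational lam2)
    (a₁ a₂ a₃ : ℕ) (hge : 2 ≤ a₁ + a₂ + a₃) :
    ((a₁ : ℝ) * 1 + a₂ * lam2 + a₃ * lam3 = 1 →
      ∃ δ : ℕ, 1 ≤ δ ∧ a₁ = 3 * δ + 1 ∧ a₂ = δ ∧ a₃ = δ) ∧
    ((a₁ : ℝ) * 1 + a₂ * lam2 + a₃ * lam3 = lam2 →
      ∃ δ : ℕ, 1 ≤ δ ∧ a₁ = 3 * δ ∧ a₂ = δ + 1 ∧ a₃ = δ) ∧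
    ((a₁ : ℝ) * 1 + a₂ * lam2 + a₃ * lam3 = lam3 →
      ∃ δ : ℕ, 1 ≤ δ ∧ a₁ = 3 * δ ∧ a₂ = δ ∧ a₃ = δ + 1) := by
  have hl3 : lam3 = -3 - lam2 := by linarith
  subst hl3
  refine ⟨fun h => ?_, fun h => ?_, fun h => ?_⟩
  · have := key_aux hirr ((a₁ : ℤ) - 3 * a₃ - 1) ((a₂ : ℤ) - a₃)
      (by push_cast; linarith)
    obtain ⟨h1, h2'⟩ := this
    have e1 : (a₁ : ℤ) = 3 * a₃ + 1 := by linarith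
    have e2 : (a₂ : ℤ) = a₃ := by linarith
    have e1' : a₁ = 3 * a₃ + 1 := by exact_mod_cast e1
    have e2' : a₂ = a₃ := by exact_mod_cast e2
    exact ⟨a₃, by omega, by omega, e2', rfl⟩
  · have := key_aux hirr ((a₁ : ℤ) - 3 * a₃) ((a₂ : ℤ) - a₃ - 1)
      (by push_cast; linarith)
    obtain ⟨h1, h2'⟩ := this
    have e1 : (a₁ : ℤ) = 3 * a₃ := by linarith
    have e2 : (a₂ : ℤ) = a₃ + 1 := by linarith
    have e1' : a₁ = 3 * a₃ := by exact_mod_cast e1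
    have e2' : a₂ = a₃ + 1 := by exact_mod_cast e2
    exact ⟨a₃, by omega, e1', e2', rfl⟩
  · have := key_aux hirr ((a₁ : ℤ) - 3 * a₃ + 3) ((a₂ : ℤ) - a₃ + 1)
      (by push_cast; linarith)
    obtain ⟨h1, h2'⟩ := this
    have e1 : (a₁ : ℤ) = 3 * a₃ - 3 := by linarith
    have e2 : (a₂ : ℤ) = a₃ - 1 := by linarith
    have h3pos : 1 ≤ a₃ := by
      by_contra hc
      push_neg at hc
      interval_cases a₃ <;> omega
    refine ⟨a₂, ?_, ?_, rfl, ?_⟩ <;> omega
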